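/- Let a, b, c, d be homogeneous polynomials in ℂ[x₀,x₁,x₂] of degrees 1, 2, 3, 2 respectively, with a ≠ 0 and c ≠ 0, satisfying a·c = b² − d². Then c is not irreducible; more precisely, there exists a nonzero homogeneous polynomial l of degree 1 dividing c. -/

import Mathlib

/-!
A nonzero linear form `a` is irreducible, hence prime since `ℂ[x₀,x₁,x₂]` is factorial.
From `a·c = (b - d)(b + d)` it divides one of the two quadrics, and cancelling `a` writes `c`
as a linear form times the other quadric. The cofactor of a homogeneous divisor of a homogeneous
polynomial is homogeneous, so both factors have positive degree and neither is a unit.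
-/

namespace MvPolynomial

variable {σ R : Type*}

section GradedAlgebra

attribute [local instance] MvPolynomial.gradedAlgebra

theorem homogeneousComponent_mul_of_isHomogeneous_left [CommSemiring R]
    {φ ψ : MvPolynomial σ R} {m : ℕ} (hφ : φ.IsHomogeneous m) (j : ℕ) :
    homogeneousComponent (m + j) (φ * ψ) = φ * homogeneousComponent j ψ := by
  have := DirectSum.coe_decompose_mul_of_left_mem_of_le (homogeneousSubmodule σ R)
    (b := ψ) (n := m + j) ((mem_homogeneousSubmodule m φ).2 hφ) (Nat.le_add_right m j)
  simpa only [DirectSum.decompose, Equiv.coe_fn_mk, decomposition.decompose'_apply,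
    Nat.add_sub_cancel_left] using this

end GradedAlgebra

theorem IsHomogeneous.of_mul_left [CommRing R] [NoZeroDivisors R] {φ ψ : MvPolynomial σ R}
    {m n : ℕ} (hφ : φ.IsHomogeneous m) (hφ0 : φ ≠ 0) (h : (φ * ψ).IsHomogeneous (m + n)) :
    ψ.IsHomogeneous n := by
  have hcomp : ∀ j ≠ n, homogeneousComponent j ψ = 0 := fun j hj ↦ by
    refine (mul_eq_zero.1 ?_).resolve_left hφ0
    rw [← homogeneousComponent_mul_of_isHomogeneous_left hφ,
      homogeneousComponent_of_mem ((mem_homogeneousSubmodule _ _).2 h), if_neg (by omega)]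
  have hψ : ψ = homogeneousComponent n ψ := by
    conv_lhs => rw [← sum_homogeneousComponent ψ]
    refine Finset.sum_eq_single n (fun j _ hj ↦ hcomp j hj) fun hn ↦ ?_
    exact homogeneousComponent_eq_zero _ _ (by simpa using hn)
  rw [hψ]
  exact homogeneousComponent_isHomogeneous n ψ

theorem IsHomogeneous.not_isUnit [CommSemiring R] [Nontrivial R] {φ : MvPolynomial σ R} {n : ℕ}
    (hφ : φ.IsHomogeneous n) (hn : n ≠ 0) : ¬IsUnit φ := fun hunit ↦ by
  have h0 : constantCoeff φ = 0 := by
    rw [constantCoeff_eq]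
    exact hφ.coeff_eq_zero (by simpa using hn.symm)
  exact not_isUnit_zero (h0 ▸ hunit.map constantCoeff)

theorem prime_of_totalDegree_eq_one {K : Type*} [Field K] {p : MvPolynomial σ K}
    (hp : p.totalDegree = 1) : Prime p := by
  refine (irreducible_of_totalDegree_eq_one hp fun x hx ↦ ?_).prime
  refine Ne.isUnit fun hx0 ↦ ?_
  have : p = 0 := by ext i; simpa [hx0] using hx i
  simp [this] at hp

theorem IsHomogeneous.exists_eq_mul_of_dvd_of_mul_eq [CommRing R] [IsDomain R]
    {p c f g : MvPolynomial σ R} {m n : ℕ} (hp : p.IsHomogeneous m) (hp0 : p ≠ 0)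
    (hf : f.IsHomogeneous (m + n)) (hpf : p ∣ f) (h : p * c = f * g) :
    ∃ q : MvPolynomial σ R, q.IsHomogeneous n ∧ c = q * g := by
  obtain ⟨q, rfl⟩ := hpf
  refine ⟨q, hp.of_mul_left hp0 hf, mul_left_cancel₀ hp0 ?_⟩
  rw [h, mul_assoc]

end MvPolynomial

open MvPolynomial

theorem cubic_has_linear_factor_general
    (a b c d : MvPolynomial (Fin 3) ℂ)
    (ha : a.IsHomogeneous 1) (hb : b.IsHomogeneous 2)
    (hd : d.IsHomogeneous 2)
    (ha0 : a ≠ 0) (hc0 : c ≠ 0)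
    (heq : a * c = b ^ 2 - d ^ 2) :
    ¬ Irreducible c ∧
      ∃ l : MvPolynomial (Fin 3) ℂ, l ≠ 0 ∧ l.IsHomogeneous 1 ∧ l ∣ c := by
  have hfac : a * c = (b - d) * (b + d) := by rw [heq]; ring
  obtain ⟨q, e, hq, he, hce⟩ :
      ∃ q e : MvPolynomial (Fin 3) ℂ,
        q.IsHomogeneous 1 ∧ e.IsHomogeneous 2 ∧ c = q * e := by
    have ha_prime : Prime a := prime_of_totalDegree_eq_one (ha.totalDegree ha0)
    rcases ha_prime.dvd_or_dvd ⟨c, hfac.symm⟩ with h | h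
    · obtain ⟨q, hq, hce⟩ :=
        ha.exists_eq_mul_of_dvd_of_mul_eq (n := 1) ha0 (hb.sub hd) h hfac
      exact ⟨q, _, hq, hb.add hd, hce⟩
    · obtain ⟨q, hq, hce⟩ :=
        ha.exists_eq_mul_of_dvd_of_mul_eq (n := 1) ha0 (hb.add hd) h (hfac.trans (mul_comm _ _))
      exact ⟨q, _, hq, hb.sub hd, hce⟩
  have hq0 : q ≠ 0 := left_ne_zero_of_mul (hce ▸ hc0)
  refine ⟨fun hirr ↦ ?_, q, hq0, hq, e, hce⟩
  rcases hirr.isUnit_or_isUnit hce with h | h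
  exacts [hq.not_isUnit one_ne_zero h, he.not_isUnit two_ne_zero h]

/-- If `a, b, c, d` are homogeneous polynomials in `ℂ[x₀,x₁,x₂]` of degrees `1, 2, 3, 2`
respectively, with `a ≠ 0` and `c ≠ 0`, satisfying `a·c = b² − d²`, then `c` is divisible
by a nonzero homogeneous polynomial of degree `1` (so `c` is not irreducible). -/
theorem cubic_has_linear_factor
    (a b c d : MvPolynomial (Fin 3) ℂ)
    (ha : a.IsHomogeneous 1) (hb : b.IsHomogeneous 2)
    (hc : c.IsHomogeneous 3) (hd : d.IsHomogeneous 2)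
    (ha0 : a ≠ 0) (hc0 : c ≠ 0)
    (heq : a * c = b ^ 2 - d ^ 2) :
    ¬ Irreducible c ∧
      ∃ l : MvPolynomial (Fin 3) ℂ, l ≠ 0 ∧ l.IsHomogeneous 1 ∧ l ∣ c :=
  cubic_has_linear_factor_general a b c d ha hb hd ha0 hc0 heq
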